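/- Let n ≥ 2 and m ≥ 1 be integers, and for each integer i with 0 ≤ i ≤ m−1 let u_i(s) = cosh(s)^i · sinh(s)^{2−n−m} for s > 0. Then (Q_m u_i)(s) = 0 for all s > 0, where Q_m = Γ_1 ∘ Γ_2 ∘ ⋯ ∘ Γ_m is the composition of the first-order operators Γ_k. -/
import Mathlib


/-- The first-order operator `Γ_k f (s) = f'(s) + (n+k-2)·coth(s)·f(s)`. -/
noncomputable def Gop (n k : ℤ) (f : ℝ → ℝ) : ℝ → ℝ := fun s =>
  deriv f s + ((n : ℝ) + (k : ℝ) - 2) * (Real.cosh s / Real.sinh s) * f s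

/-- `Q_m = Γ_1 ∘ Γ_2 ∘ ⋯ ∘ Γ_m` (with `Γ_m` applied first). -/
noncomputable def Qop (n : ℤ) : ℕ → (ℝ → ℝ) → (ℝ → ℝ)
  | 0 => id
  | m + 1 => fun f => Qop n m (Gop n ((m : ℤ) + 1) f)

lemma Qop_zero (n : ℤ) (m : ℕ) (s : ℝ) : Qop n m (fun _ => (0:ℝ)) s = 0 := by
  induction m generalizing s with
  | zero => simp [Qop]
  | succ m ih =>
    have h : Gop n ((m : ℤ) + 1) (fun _ => (0:ℝ)) = fun _ => (0:ℝ) := by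
      funext t; simp [Gop]
    simp only [Qop, h]
    exact ih s

lemma Qop_congr (n : ℤ) (m : ℕ) (f g : ℝ → ℝ) (s : ℝ) (h : f =ᶠ[nhds s] g) :
    Qop n m f s = Qop n m g s := by
  induction m generalizing f g s with
  | zero => exact h.eq_of_nhds
  | succ m ih =>
    apply ih
    have hd : deriv f =ᶠ[nhds s] deriv g := h.deriv
    filter_upwards [hd, h] with t h1 h2
    simp [Gop, h1, h2]

lemma Gop_eval (n k i a : ℤ) (c : ℝ) (s : ℝ) (hs : 0 < s) :
    Gop n k (fun t => c * (Real.cosh t ^ i * Real.sinh t ^ a)) s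
      = (c * (i : ℝ)) * (Real.cosh s ^ (i - 1) * Real.sinh s ^ (a + 1))
        + (c * ((a : ℝ) + (n : ℝ) + (k : ℝ) - 2)) *
          (Real.cosh s ^ (i + 1) * Real.sinh s ^ (a - 1)) := by
  have hch : Real.cosh s ≠ 0 := ne_of_gt (Real.cosh_pos s)
  have hsh : Real.sinh s ≠ 0 := ne_of_gt (Real.sinh_pos_iff.mpr hs)
  have h1 : HasDerivAt (fun t => Real.cosh t ^ i)
      (((i : ℝ) * Real.cosh s ^ (i - 1)) * Real.sinh s) s :=
    (hasDerivAt_zpow i (Real.cosh s) (Or.inl hch)).comp s (Real.hasDerivAt_cosh s)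
  have h2 : HasDerivAt (fun t => Real.sinh t ^ a)
      (((a : ℝ) * Real.sinh s ^ (a - 1)) * Real.cosh s) s :=
    (hasDerivAt_zpow a (Real.sinh s) (Or.inl hsh)).comp s (Real.hasDerivAt_sinh s)
  have h3 : HasDerivAt (fun t => c * (Real.cosh t ^ i * Real.sinh t ^ a))
      (c * ((((i : ℝ) * Real.cosh s ^ (i - 1)) * Real.sinh s) * Real.sinh s ^ a
        + Real.cosh s ^ i * (((a : ℝ) * Real.sinh s ^ (a - 1)) * Real.cosh s))) s :=
    (h1.mul h2).const_mul c
  rw [Gop, h3.deriv]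
  rw [zpow_sub_one₀ hch, zpow_sub_one₀ hsh, zpow_add_one₀ hch, zpow_add_one₀ hsh]
  field_simp
  ring

lemma key (n : ℤ) : ∀ m : ℕ, ∀ c : ℝ, ∀ i : ℤ, 0 ≤ i → i < m → ∀ s : ℝ, 0 < s →
    Qop n m (fun t => c * (Real.cosh t ^ i * Real.sinh t ^ (2 - n - (m : ℤ)))) s = 0 := by
  intro m
  induction m with
  | zero => intro c i h0 h1 s hs; omega
  | succ m ih =>
    intro c i h0 h1 s hs
    simp only [Qop]
    have heq : Gop n ((m : ℤ) + 1)
        (fun t => c * (Real.cosh t ^ i * Real.sinh t ^ (2 - n - ((m : ℕ) + 1 : ℕ))))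
        =ᶠ[nhds s] fun t =>
          (c * (i : ℝ)) * (Real.cosh t ^ (i - 1) * Real.sinh t ^ (2 - n - (m : ℤ))) := by
      filter_upwards [Ioi_mem_nhds hs] with t ht
      have := Gop_eval n ((m : ℤ) + 1) i (2 - n - ((m : ℕ) + 1 : ℕ)) c t ht
      rw [this]
      have e1 : (2 - n - (((m : ℕ) + 1 : ℕ) : ℤ)) + 1 = 2 - n - (m : ℤ) := by
        push_cast; ring
      have e2 : ((2 - n - (((m : ℕ) + 1 : ℕ) : ℤ) : ℤ) : ℝ) + (n : ℝ) + (((m : ℤ) + 1 : ℤ) : ℝ) - 2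
          = 0 := by push_cast; ring
      rw [e1, e2]
      ring
    rw [Qop_congr n m _ _ s heq]
    rcases eq_or_lt_of_le h0 with h | h
    · have : (fun t => (c * (i : ℝ)) *
          (Real.cosh t ^ (i - 1) * Real.sinh t ^ (2 - n - (m : ℤ)))) = fun _ => (0:ℝ) := by
        funext t; rw [← h]; simp
      rw [this]
      exact Qop_zero n m s
    · exact ih (c * (i : ℝ)) (i - 1) (by omega) (by push_cast at h1 ⊢; omega) s hs

/-- Proposition `P:Q_m`: `Q_m` annihilates `u_i(s) = cosh^i(s) sinh^{2-n-m}(s)`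
    for `0 ≤ i ≤ m-1`. -/
theorem stmt_2 (n : ℤ) (hn : 2 ≤ n) (m : ℕ) (hm : 1 ≤ m) (i : ℕ) (hi : i < m)
    (s : ℝ) (hs : 0 < s) :
    Qop n m (fun t => Real.cosh t ^ (i : ℤ) * Real.sinh t ^ (2 - n - (m : ℤ))) s = 0 := by
  have := key n m 1 (i : ℤ) (by positivity) (by exact_mod_cast hi) s hs
  simpa using this
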